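/- Let μ be a finite Borel measure on the interval (0,∞), let ψ(t) = ∫_{(0,∞)} exp(−t·x) dμ(x) for t > 0, let n ∈ ℕ, m ≥ 1, c > 0, a ≤ b real numbers, and let h₁, …, h_m : [a,b] → [0,∞) be continuously differentiable. Then the iterated integral over the box [a,b]^m satisfies ∫_a^b ⋯ ∫_a^b ψ⁽ⁿ⁺ᵐ⁾(c + h₁(t₁) + ⋯ + h_m(t_m)) · h₁′(t₁)⋯h_m′(t_m) dt₁ ⋯ dt_m = ∫_{(0,∞)} (−x)ⁿ exp(−c·x) · ∏_{k=1}^m ( exp(−x·h_k(b)) − exp(−x·h_k(a)) ) dμ(x). -/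

import Mathlib

/-!
Differentiating under the integral sign, `ψ⁽ʲ⁾(s) = ∫ (-x)ʲ e^{-sx} dμ(x)` for `s > 0`,
the domination coming from `xʲ e^{-sx} ≤ j!/sʲ`. At `s = c + Σ h_k(t_k) ≥ c` the resulting
integrand is bounded on `[a,b]^m × (0,∞)`, so Fubini swaps the two integrals. For fixed `x`
the integral over the box factors into one-dimensional integrals of `d/dt exp(-x h_k(t))`,
which the fundamental theorem of calculus evaluates.
-/

open MeasureTheory Set Filter

open scoped Nat

lemma norm_neg_pow_mul_exp_le {s u x : ℝ} (hs : 0 < s) (hsu : s ≤ u) (hx : 0 ≤ x) (j : ℕ) :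
    ‖(-x) ^ j * Real.exp (-u * x)‖ ≤ j ! / s ^ j := by
  have hexp := Real.pow_div_factorial_le_exp _ (mul_nonneg hs.le hx) j
  rw [div_le_iff₀ (by positivity)] at hexp
  rw [le_div_iff₀ (by positivity), norm_mul, norm_pow, norm_neg, Real.norm_of_nonneg hx,
    Real.norm_of_nonneg (Real.exp_nonneg _)]
  calc x ^ j * Real.exp (-u * x) * s ^ j ≤ (s * x) ^ j * Real.exp (-(s * x)) := by
        rw [mul_pow, mul_comm (s ^ j), mul_right_comm]
        gcongr
        nlinarith
    _ ≤ j ! := by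
        rw [Real.exp_neg, ← div_eq_mul_inv, div_le_iff₀ (Real.exp_pos _)]
        linarith

section Laplace

variable (μ : Measure ℝ) [IsFiniteMeasure μ]

lemma integrable_restrict_Ioi_neg_pow_mul_exp (j : ℕ) {s : ℝ} (hs : 0 < s) :
    Integrable (fun x => (-x) ^ j * Real.exp (-s * x)) (μ.restrict (Ioi 0)) := by
  refine Integrable.mono' (integrable_const (j ! / s ^ j : ℝ))
    (by fun_prop : Continuous _).aestronglyMeasurable ?_
  filter_upwards [ae_restrict_mem measurableSet_Ioi] with x hx
  exact norm_neg_pow_mul_exp_le hs le_rfl (le_of_lt hx) j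

lemma hasDerivAt_setIntegral_Ioi_neg_pow_mul_exp (j : ℕ) {s : ℝ} (hs : 0 < s) :
    HasDerivAt (fun u => ∫ x in Ioi 0, (-x) ^ j * Real.exp (-u * x) ∂μ)
      (∫ x in Ioi 0, (-x) ^ (j + 1) * Real.exp (-s * x) ∂μ) s := by
  have hs2 : 0 < s / 2 := half_pos hs
  refine (hasDerivAt_integral_of_dominated_loc_of_deriv_le (Metric.ball_mem_nhds s hs2)
    (F := fun u x => (-x) ^ j * Real.exp (-u * x))
    (F' := fun u x => (-x) ^ (j + 1) * Real.exp (-u * x))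
    (bound := fun _ => ((j + 1) ! / (s / 2) ^ (j + 1) : ℝ))
    (Eventually.of_forall fun _ => (by fun_prop : Continuous _).aestronglyMeasurable)
    (integrable_restrict_Ioi_neg_pow_mul_exp μ j hs)
    (by fun_prop : Continuous _).aestronglyMeasurable ?_ (integrable_const _) ?_).2
  · filter_upwards [ae_restrict_mem measurableSet_Ioi] with x hx u hu
    have hu : s / 2 ≤ u := by
      have := (abs_lt.1 (Real.dist_eq u s ▸ Metric.mem_ball.1 hu)).1
      linarith
    exact norm_neg_pow_mul_exp_le hs2 hu (le_of_lt hx) (j + 1)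
  · exact Eventually.of_forall fun x u _ =>
      (((hasDerivAt_neg u).mul_const x).exp.const_mul ((-x) ^ j)).congr_deriv (by ring)

theorem iteratedDeriv_setIntegral_Ioi_exp_neg_mul (j : ℕ) {s : ℝ} (hs : 0 < s) :
    iteratedDeriv j (fun t => ∫ x in Ioi 0, Real.exp (-t * x) ∂μ) s
      = ∫ x in Ioi 0, (-x) ^ j * Real.exp (-s * x) ∂μ := by
  induction j generalizing s with
  | zero => simp
  | succ j ih =>
    have hEq : iteratedDeriv j (fun t => ∫ x in Ioi 0, Real.exp (-t * x) ∂μ) =ᶠ[nhds s]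
        fun u => ∫ x in Ioi 0, (-x) ^ j * Real.exp (-u * x) ∂μ :=
      eventually_of_mem (Ioi_mem_nhds hs) fun u hu => ih hu
    rw [iteratedDeriv_succ, hEq.deriv_eq]
    exact (hasDerivAt_setIntegral_Ioi_neg_pow_mul_exp μ j hs).deriv

end Laplace

lemma setIntegral_univ_pi_prod {ι 𝕜 : Type*} [Fintype ι] [RCLike 𝕜] {α : ι → Type*}
    [∀ i, MeasurableSpace (α i)] (μ : ∀ i, Measure (α i)) [∀ i, SigmaFinite (μ i)]
    (s : ∀ i, Set (α i)) (f : ∀ i, α i → 𝕜) :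
    ∫ t in univ.pi s, ∏ i, f i (t i) ∂Measure.pi μ = ∏ i, ∫ x in s i, f i x ∂μ i := by
  rw [Measure.restrict_pi_pi, integral_fintype_prod_eq_prod]

theorem integral_Icc_eq_sub_of_hasDerivWithinAt {E : Type*} [NormedAddCommGroup E]
    [NormedSpace ℝ E] [CompleteSpace E] {f f' : ℝ → E} {a b : ℝ} (hab : a ≤ b)
    (hf : ∀ t ∈ Icc a b, HasDerivWithinAt f (f' t) (Icc a b) t)
    (hf' : ContinuousOn f' (Icc a b)) :
    ∫ t in Icc a b, f' t = f b - f a := by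
  rw [integral_Icc_eq_integral_Ioc, ← intervalIntegral.integral_of_le hab]
  exact intervalIntegral.integral_eq_sub_of_hasDeriv_right_of_le hab
    (fun t ht => (hf t ht).continuousWithinAt)
    (fun t ht => ((hf t (Ioo_subset_Icc_self ht)).hasDerivAt
      (Icc_mem_nhds ht.1 ht.2)).hasDerivWithinAt)
    (hf'.intervalIntegrable_of_Icc hab)

lemma integrable_neg_pow_mul_exp_sum_mul_prod (μ : Measure ℝ) [IsFiniteMeasure μ]
    {ι : Type*} [Fintype ι] {s : ι → Set ℝ} (hs : ∀ i, IsCompact (s i)) (j : ℕ) {c : ℝ}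
    (hc : 0 < c) {h h' : ι → ℝ → ℝ} (hnonneg : ∀ i, ∀ t ∈ s i, 0 ≤ h i t)
    (hh : ∀ i, ContinuousOn (h i) (s i)) (hh' : ∀ i, ContinuousOn (h' i) (s i)) :
    Integrable (Function.uncurry fun (t : ι → ℝ) (x : ℝ) =>
        (-x) ^ j * Real.exp (-(c + ∑ i, h i (t i)) * x) * ∏ i, h' i (t i))
      ((volume.restrict (univ.pi s)).prod (μ.restrict (Ioi 0))) := by
  have hbox : MeasurableSet (univ.pi s) := .univ_pi fun i => (hs i).measurableSet
  choose M hM using fun i => (hs i).exists_bound_of_continuousOn (hh' i)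
  have hcoord {g : ι → ℝ → ℝ} (hg : ∀ i, ContinuousOn (g i) (s i)) (i : ι) :
      ContinuousOn (fun p : (ι → ℝ) × ℝ => g i (p.1 i)) (univ.pi s ×ˢ Ioi 0) :=
    (hg i).comp (by fun_prop) fun p hp => hp.1 i (mem_univ i)
  have hcont : ContinuousOn (Function.uncurry fun (t : ι → ℝ) (x : ℝ) =>
      (-x) ^ j * Real.exp (-(c + ∑ i, h i (t i)) * x) * ∏ i, h' i (t i))
      (univ.pi s ×ˢ Ioi 0) :=
    ((continuous_snd.neg.pow j).continuousOn.mul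
      ((continuousOn_const.add (continuousOn_finsetSum _ fun i _ => hcoord hh i)).neg.mul
        continuous_snd.continuousOn).rexp).mul
      (continuousOn_finsetProd _ fun i _ => hcoord hh' i)
  have : IsFiniteMeasure (volume.restrict (univ.pi s)) :=
    isFiniteMeasure_restrict.2 (isCompact_univ_pi hs).measure_lt_top.ne
  refine Integrable.mono' (integrable_const ((j ! : ℝ) / c ^ j * ∏ i, M i)) ?_ ?_
  · rw [Measure.prod_restrict]
    exact hcont.aestronglyMeasurable (hbox.prod measurableSet_Ioi)
  rw [Measure.prod_restrict]
  filter_upwards [ae_restrict_mem (hbox.prod measurableSet_Ioi)] with ⟨t, x⟩ ⟨ht, hx⟩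
  have hsum : 0 ≤ ∑ i, h i (t i) :=
    Finset.sum_nonneg fun i _ => hnonneg i _ (ht i (mem_univ i))
  rw [Function.uncurry_apply_pair, norm_mul, norm_prod]
  exact mul_le_mul (norm_neg_pow_mul_exp_le hc (le_add_of_nonneg_right hsum) (le_of_lt hx) j)
    (Finset.prod_le_prod (fun i _ => norm_nonneg _) fun i _ => hM i _ (ht i (mem_univ i)))
    (by positivity) (by positivity)

lemma neg_pow_add_card_mul_exp_sum_mul_prod {ι : Type*} [Fintype ι] (n : ℕ) (c x : ℝ)
    (y z : ι → ℝ) :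
    (-x) ^ (n + Fintype.card ι) * Real.exp (-(c + ∑ i, y i) * x) * ∏ i, z i
      = (-x) ^ n * Real.exp (-c * x) * ∏ i, (Real.exp (-x * y i) * (-x * z i)) := by
  rw [Finset.prod_mul_distrib, Finset.prod_mul_distrib, Finset.prod_const, Finset.card_univ,
    ← Real.exp_sum, ← Finset.mul_sum,
    show -(c + ∑ i, y i) * x = -c * x + -x * ∑ i, y i by ring, Real.exp_add, pow_add]
  ring

lemma setIntegral_pi_Icc_neg_pow_mul_exp_sum_mul_prod {ι : Type*} [Fintype ι] {a b : ℝ}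
    (hab : a ≤ b) {h h' : ι → ℝ → ℝ}
    (hderiv : ∀ i, ∀ t ∈ Icc a b, HasDerivWithinAt (h i) (h' i t) (Icc a b) t)
    (hcont : ∀ i, ContinuousOn (h' i) (Icc a b)) (n : ℕ) (c x : ℝ) :
    ∫ t in univ.pi fun _ : ι => Icc a b,
        (-x) ^ (n + Fintype.card ι) * Real.exp (-(c + ∑ i, h i (t i)) * x) * ∏ i, h' i (t i)
      = (-x) ^ n * Real.exp (-c * x) *
          ∏ i, (Real.exp (-x * h i b) - Real.exp (-x * h i a)) := by
  have hftc (i : ι) : ∫ t in Icc a b, Real.exp (-x * h i t) * (-x * h' i t)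
      = Real.exp (-x * h i b) - Real.exp (-x * h i a) :=
    integral_Icc_eq_sub_of_hasDerivWithinAt hab
      (fun t ht => ((hderiv i t ht).const_mul (-x)).exp)
      (((continuousOn_const.mul fun t ht => (hderiv i t ht).continuousWithinAt).rexp).mul
        (continuousOn_const.mul (hcont i)))
  simp_rw [neg_pow_add_card_mul_exp_sum_mul_prod]
  rw [integral_const_mul, volume_pi, setIntegral_univ_pi_prod (fun _ => volume)
    (fun _ => Icc a b) fun i t => Real.exp (-x * h i t) * (-x * h' i t)]
  simp_rw [hftc]

theorem stmt_5_general (μ : Measure ℝ) [IsFiniteMeasure μ]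
    (ψ : ℝ → ℝ)
    (hψ : ∀ t : ℝ, ψ t = ∫ x in Ioi (0:ℝ), Real.exp (-t * x) ∂μ)
    (n m : ℕ) (c : ℝ) (hc : 0 < c) (a b : ℝ) (hab : a ≤ b)
    (h h' : Fin m → ℝ → ℝ)
    (hnonneg : ∀ k, ∀ t ∈ Icc a b, 0 ≤ h k t)
    (hderiv : ∀ k, ∀ t ∈ Icc a b, HasDerivWithinAt (h k) (h' k t) (Icc a b) t)
    (hcont : ∀ k, ContinuousOn (h' k) (Icc a b)) :
    ∫ t in Set.univ.pi (fun _ : Fin m => Icc a b),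
        iteratedDeriv (n + m) ψ (c + ∑ k, h k (t k)) * ∏ k, h' k (t k)
      = ∫ x in Ioi (0:ℝ),
          (-x) ^ n * Real.exp (-c * x) *
            ∏ k, (Real.exp (-x * h k b) - Real.exp (-x * h k a)) ∂μ := by
  obtain rfl : ψ = fun t => ∫ x in Ioi 0, Real.exp (-t * x) ∂μ := funext hψ
  have hh (k : Fin m) : ContinuousOn (h k) (Icc a b) :=
    fun t ht => (hderiv k t ht).continuousWithinAt
  have hbox : MeasurableSet (univ.pi fun _ : Fin m => Icc a b) :=
    .univ_pi fun _ => measurableSet_Icc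
  calc _ = ∫ t in univ.pi fun _ : Fin m => Icc a b, (∫ x in Ioi 0,
          (-x) ^ (n + m) * Real.exp (-(c + ∑ k, h k (t k)) * x) * ∏ k, h' k (t k) ∂μ) := by
        refine setIntegral_congr_fun hbox fun t ht => ?_
        have hpos : 0 < c + ∑ k, h k (t k) :=
          add_pos_of_pos_of_nonneg hc <|
            Finset.sum_nonneg fun k _ => hnonneg k _ (ht k (mem_univ k))
        rw [iteratedDeriv_setIntegral_Ioi_exp_neg_mul μ _ hpos, integral_mul_const]
    _ = ∫ x in Ioi 0, (∫ t in univ.pi fun _ : Fin m => Icc a b,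
          (-x) ^ (n + m) * Real.exp (-(c + ∑ k, h k (t k)) * x) * ∏ k, h' k (t k)) ∂μ :=
        integral_integral_swap (integrable_neg_pow_mul_exp_sum_mul_prod μ
          (fun _ => isCompact_Icc) _ hc hnonneg hh hcont)
    _ = _ := setIntegral_congr_fun measurableSet_Ioi fun x _ => by
        simpa using setIntegral_pi_Icc_neg_pow_mul_exp_sum_mul_prod hab hderiv hcont n c x

/-- Dimension reduction for multiple integrals against higher derivatives of a Laplace
transform: the `m`-fold integral over the box `[a,b]^m` of
`ψ⁽ⁿ⁺ᵐ⁾(c + Σ h_k(t_k)) · Π h_k'(t_k)` equals a single integral against `μ` in which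
each coordinate contributes the factor `exp(-x·h_k(b)) - exp(-x·h_k(a))`. -/
theorem stmt_5 (μ : Measure ℝ) [IsFiniteMeasure μ]
    (ψ : ℝ → ℝ)
    (hψ : ∀ t : ℝ, ψ t = ∫ x in Ioi (0:ℝ), Real.exp (-t * x) ∂μ)
    (n m : ℕ) (hm : 1 ≤ m) (c : ℝ) (hc : 0 < c) (a b : ℝ) (hab : a ≤ b)
    (h h' : Fin m → ℝ → ℝ)
    (hnonneg : ∀ k, ∀ t ∈ Icc a b, 0 ≤ h k t)
    (hderiv : ∀ k, ∀ t ∈ Icc a b, HasDerivWithinAt (h k) (h' k t) (Icc a b) t)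
    (hcont : ∀ k, ContinuousOn (h' k) (Icc a b)) :
    ∫ t in Set.univ.pi (fun _ : Fin m => Icc a b),
        iteratedDeriv (n + m) ψ (c + ∑ k, h k (t k)) * ∏ k, h' k (t k)
      = ∫ x in Ioi (0:ℝ),
          (-x) ^ n * Real.exp (-c * x) *
            ∏ k, (Real.exp (-x * h k b) - Real.exp (-x * h k a)) ∂μ :=
  stmt_5_general μ ψ hψ n m c hc a b hab h h' hnonneg hderiv hcont
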